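/- Define recursively the 2^n × 2^n matrices over k[x₀,…,x_n,y₀,…,y_n] by φ₀ = (x₀), ψ₀ = (y₀), and φ_n = [[x_n, φ_{n−1}],[ψ_{n−1}, −y_n]], ψ_n = [[y_n, φ_{n−1}],[ψ_{n−1}, −x_n]]. Then φ_n·ψ_n = ψ_n·φ_n = (Σ_{i=0}^n xᵢyᵢ)·Id_{2^n}. -/

import Mathlib

noncomputable section
open MvPolynomial

/-- Index type of size `2^n` for the Knörrer matrices. -/
def KIdx : ℕ → Type
  | 0 => Unit
  | n + 1 => KIdx n ⊕ KIdx n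

def kIdxFintype : (n : ℕ) → Fintype (KIdx n)
  | 0 => inferInstanceAs (Fintype Unit)
  | n + 1 => letI := kIdxFintype n; inferInstanceAs (Fintype (KIdx n ⊕ KIdx n))

instance (n : ℕ) : Fintype (KIdx n) := kIdxFintype n

def kIdxDecEq : (n : ℕ) → DecidableEq (KIdx n)
  | 0 => inferInstanceAs (DecidableEq Unit)
  | n + 1 => letI := kIdxDecEq n; inferInstanceAs (DecidableEq (KIdx n ⊕ KIdx n))

instance (n : ℕ) : DecidableEq (KIdx n) := kIdxDecEq n

/-- The polynomial ring `k[x₀,x₁,…,y₀,y₁,…]`: `X (inl i) = xᵢ`, `X (inr i) = yᵢ`. -/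
abbrev KRing (k : Type*) [CommRing k] := MvPolynomial (ℕ ⊕ ℕ) k

variable (k : Type*) [CommRing k]

mutual
/-- The Knörrer matrix `φ_n`. -/
noncomputable def knPhi : (n : ℕ) → Matrix (KIdx n) (KIdx n) (KRing k)
  | 0 => fun _ _ => X (Sum.inl 0)
  | n + 1 =>
    Matrix.fromBlocks ((X (Sum.inl (n + 1)) : KRing k) • 1) (knPhi n) (knPsi n)
      (-((X (Sum.inr (n + 1)) : KRing k) • 1))
/-- The Knörrer matrix `ψ_n`. -/
noncomputable def knPsi : (n : ℕ) → Matrix (KIdx n) (KIdx n) (KRing k)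
  | 0 => fun _ _ => X (Sum.inr 0)
  | n + 1 =>
    Matrix.fromBlocks ((X (Sum.inr (n + 1)) : KRing k) • 1) (knPhi n) (knPsi n)
      (-((X (Sum.inl (n + 1)) : KRing k) • 1))
end

/-! `φ_{n+1}` and `ψ_{n+1}` are `[[a, φ_n], [ψ_n, -b]]` and `[[b, φ_n], [ψ_n, -a]]` with
`(a, b) = (x_{n+1}, y_{n+1})`. In either product the off-diagonal blocks cancel because the scalar
blocks commute with `φ_n` and `ψ_n`, and the diagonal blocks are `φ_nψ_n + ab` and `ψ_nφ_n + ab`,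
so by induction each step adds `x_{n+1}y_{n+1}` to the scalar. -/

theorem Matrix.fromBlocks_smul_one_mul_fromBlocks_smul_one {R m : Type*} [CommRing R]
    [Fintype m] [DecidableEq m] {A B : Matrix m m R} {s : R}
    (hAB : A * B = s • 1) (hBA : B * A = s • 1) (a b : R) :
    Matrix.fromBlocks (a • 1) A B (-(b • 1)) * Matrix.fromBlocks (b • 1) A B (-(a • 1)) =
      (s + a * b) • (1 : Matrix (m ⊕ m) (m ⊕ m) R) := by
  rw [Matrix.fromBlocks_multiply, hAB, hBA, ← Matrix.fromBlocks_one, Matrix.fromBlocks_smul]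
  simp only [Matrix.smul_mul, Matrix.mul_smul, Matrix.one_mul, Matrix.mul_one, Matrix.mul_neg,
    Matrix.neg_mul, neg_neg, smul_neg, smul_smul, add_smul, smul_zero, mul_comm b a]
  congr 1 <;> abel

instance : Unique (KIdx 0) := inferInstanceAs (Unique Unit)

/-- the recursively defined `2^n × 2^n` Knörrer matrices satisfy
`φ_n·ψ_n = ψ_n·φ_n = (Σ_{i=0}^n xᵢyᵢ)·Id`. -/
theorem stmt_16 (n : ℕ) :
    knPhi k n * knPsi k n =
      (∑ i ∈ Finset.range (n + 1), (X (Sum.inl i) * X (Sum.inr i) : KRing k)) •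
        (1 : Matrix (KIdx n) (KIdx n) (KRing k)) ∧
    knPsi k n * knPhi k n =
      (∑ i ∈ Finset.range (n + 1), (X (Sum.inl i) * X (Sum.inr i) : KRing k)) •
        (1 : Matrix (KIdx n) (KIdx n) (KRing k)) := by
  induction n with
  | zero =>
    constructor <;> ext i j : 1 <;>
      rw [Subsingleton.elim i j, Matrix.mul_apply, Fintype.sum_unique] <;>
      simp [knPhi, knPsi, mul_comm]
  | succ n ih =>
    rw [Finset.sum_range_succ]
    refine ⟨Matrix.fromBlocks_smul_one_mul_fromBlocks_smul_one ih.1 ih.2 _ _, ?_⟩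
    rw [mul_comm (X (Sum.inl (n + 1)))]
    exact Matrix.fromBlocks_smul_one_mul_fromBlocks_smul_one ih.1 ih.2 _ _
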